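/- The fibers of ψ are as follows: ψ⁻¹({(0,0)}) = {(z,w) ∈ ℂ^p × ℂ^q : z = 0 or w = 0}; and for every (z,w) with μ(z,w) = 0, z ≠ 0 and w ≠ 0, one has ψ⁻¹({(z,w)}) = {(λ·z, λ⁻¹·w) : λ ∈ ℝ, λ > 0}. -/

import Mathlib

/-- The weighted square norm `|z|²_c = ∑ c_j |z_j|²` on `ℂ^n`. -/
noncomputable def wnorm {n : ℕ} (c : Fin n → ℕ) (z : Fin n → ℂ) : ℝ :=
  ∑ j, (c j : ℝ) * ‖z j‖ ^ 2

/-- The function `μ(z,w) = |z|²_a − |w|²_b` on `ℂ^p × ℂ^q`. -/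
noncomputable def mu {p q : ℕ} (a : Fin p → ℕ) (b : Fin q → ℕ)
    (x : (Fin p → ℂ) × (Fin q → ℂ)) : ℝ :=
  wnorm a x.1 - wnorm b x.2

open Classical in
/-- The blow-down map
`ψ(z,w) = ((|w|²_b/|z|²_a)^{1/4}·z, (|z|²_a/|w|²_b)^{1/4}·w)` for `z ≠ 0` and
`w ≠ 0`, and `ψ(z,w) = (0,0)` if `z = 0` or `w = 0`. -/
noncomputable def psi {p q : ℕ} (a : Fin p → ℕ) (b : Fin q → ℕ)
    (x : (Fin p → ℂ) × (Fin q → ℂ)) : (Fin p → ℂ) × (Fin q → ℂ) :=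
  if x.1 ≠ 0 ∧ x.2 ≠ 0 then
    (((wnorm b x.2 / wnorm a x.1) ^ ((1 : ℝ) / 4)) • x.1,
     ((wnorm a x.1 / wnorm b x.2) ^ ((1 : ℝ) / 4)) • x.2)
  else (0, 0)

lemma wnorm_pos {n : ℕ} {c : Fin n → ℕ} (hc : ∀ j, 0 < c j)
    {z : Fin n → ℂ} (hz : z ≠ 0) : 0 < wnorm c z := by
  obtain ⟨j, hj⟩ := Function.ne_iff.mp hz
  refine Finset.sum_pos' (fun i _ => by positivity) ⟨j, Finset.mem_univ j, ?_⟩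
  have h1 : (0 : ℝ) < c j := Nat.cast_pos.mpr (hc j)
  have h2 : 0 < ‖z j‖ := norm_pos_iff.mpr hj
  positivity

lemma wnorm_smul {n : ℕ} (c : Fin n → ℕ) (l : ℝ) (z : Fin n → ℂ) :
    wnorm c (l • z) = l ^ 2 * wnorm c z := by
  unfold wnorm
  rw [Finset.mul_sum]
  refine Finset.sum_congr rfl fun j _ => ?_
  have : ‖(l • z) j‖ = |l| * ‖z j‖ := by
    simp [norm_smul, Real.norm_eq_abs]
  rw [this, mul_pow, sq_abs]
  ring

lemma quarter_pow {l : ℝ} (hl : 0 < l) : (l ^ 4) ^ ((1 : ℝ) / 4) = l := by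
  have : ((1 : ℝ) / 4) = ((4 : ℕ) : ℝ)⁻¹ := by norm_num
  rw [this, Real.pow_rpow_inv_natCast hl.le (by norm_num)]

/-- The fibers of `ψ`: `ψ⁻¹({(0,0)}) = {z = 0 or w = 0}` and, for `(z,w)` in
`μ⁻¹(0)` with `z ≠ 0` and `w ≠ 0`,
`ψ⁻¹({(z,w)}) = {(λ·z, λ⁻¹·w) : λ ∈ ℝ, λ > 0}`. -/
theorem stmt_12 {p q : ℕ} (hp : 1 ≤ p) (hq : 1 ≤ q)
    (a : Fin p → ℕ) (b : Fin q → ℕ) (ha : ∀ j, 0 < a j) (hb : ∀ j, 0 < b j) :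
    psi a b ⁻¹' {((0 : Fin p → ℂ), (0 : Fin q → ℂ))}
      = {x : (Fin p → ℂ) × (Fin q → ℂ) | x.1 = 0 ∨ x.2 = 0} ∧
    (∀ x : (Fin p → ℂ) × (Fin q → ℂ), mu a b x = 0 → x.1 ≠ 0 → x.2 ≠ 0 →
      psi a b ⁻¹' {x}
        = {y : (Fin p → ℂ) × (Fin q → ℂ) |
            ∃ l : ℝ, 0 < l ∧ y = (l • x.1, l⁻¹ • x.2)}) := by
  constructor
  · ext y
    simp only [Set.mem_preimage, Set.mem_singleton_iff, Set.mem_setOf_eq]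
    constructor
    · intro h
      by_contra hc
      push_neg at hc
      rw [psi, if_pos ⟨hc.1, hc.2⟩] at h
      have hA := wnorm_pos ha hc.1
      have hB := wnorm_pos hb hc.2
      have hpos : 0 < (wnorm b y.2 / wnorm a y.1) ^ ((1 : ℝ) / 4) :=
        Real.rpow_pos_of_pos (div_pos hB hA) _
      have h1 : ((wnorm b y.2 / wnorm a y.1) ^ ((1 : ℝ) / 4)) • y.1 = 0 :=
        congrArg Prod.fst h
      rcases smul_eq_zero.mp h1 with h' | h'
      · exact hpos.ne' h'
      · exact hc.1 h'
    · intro h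
      rw [psi, if_neg (by tauto)]
  · intro x hmu hx1 hx2
    have hs : wnorm b x.2 = wnorm a x.1 := by
      unfold mu at hmu; linarith
    have hA := wnorm_pos ha hx1
    ext y
    simp only [Set.mem_preimage, Set.mem_singleton_iff, Set.mem_setOf_eq]
    constructor
    · intro h
      have hy : y.1 ≠ 0 ∧ y.2 ≠ 0 := by
        by_contra hc
        rw [psi, if_neg hc] at h
        exact hx1 (congrArg Prod.fst h).symm
      rw [psi, if_pos hy] at h
      have hA' := wnorm_pos ha hy.1
      have hB' := wnorm_pos hb hy.2
      set A := wnorm a y.1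
      set B := wnorm b y.2
      set m := (B / A) ^ ((1 : ℝ) / 4) with hm
      have hm0 : 0 < m := Real.rpow_pos_of_pos (div_pos hB' hA') _
      have h1 : m • y.1 = x.1 := congrArg Prod.fst h
      have h2 : ((A / B) ^ ((1 : ℝ) / 4)) • y.2 = x.2 := congrArg Prod.snd h
      have hinv : (A / B) ^ ((1 : ℝ) / 4) = m⁻¹ := by
        rw [hm, ← Real.inv_rpow (div_nonneg hB'.le hA'.le), inv_div]
      rw [hinv] at h2
      refine ⟨m⁻¹, inv_pos.mpr hm0, ?_⟩
      have e1 : y.1 = m⁻¹ • x.1 := by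
        rw [← h1, smul_smul, inv_mul_cancel₀ hm0.ne', one_smul]
      have e2 : y.2 = (m⁻¹)⁻¹ • x.2 := by
        rw [inv_inv, ← h2, smul_smul, mul_inv_cancel₀ hm0.ne', one_smul]
      exact Prod.ext e1 e2
    · rintro ⟨l, hl, rfl⟩
      have hy1 : l • x.1 ≠ 0 := smul_ne_zero hl.ne' hx1
      have hy2 : l⁻¹ • x.2 ≠ 0 := smul_ne_zero (inv_pos.mpr hl).ne' hx2
      rw [psi]
      simp only [if_pos (And.intro hy1 hy2)]
      rw [wnorm_smul, wnorm_smul, hs]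
      have hr1 : l⁻¹ ^ 2 * wnorm a x.1 / (l ^ 2 * wnorm a x.1) = l⁻¹ ^ 4 := by
        field_simp
      have hr2 : l ^ 2 * wnorm a x.1 / (l⁻¹ ^ 2 * wnorm a x.1) = l ^ 4 := by
        field_simp
      rw [hr1, hr2, quarter_pow (inv_pos.mpr hl), quarter_pow hl]
      refine Prod.ext ?_ ?_
      · show l⁻¹ • l • x.1 = x.1
        rw [smul_smul, inv_mul_cancel₀ hl.ne', one_smul]
      · show l • l⁻¹ • x.2 = x.2
        rw [smul_smul, mul_inv_cancel₀ hl.ne', one_smul]
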